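/- In the 2-local stable homotopy category, the Toda bracket ⟨3h₂, 2h₂, c₀⟩ ⊆ π_{15}^s contains h₁d₀ and has zero indeterminacy; consequently ⟨3h₂, 2h₂, c₀⟩ = {h₁d₀}, which is nonzero. -/
import Mathlib


/-- In the 2-local stable stems, the Toda bracket `⟨3h₂, 2h₂, c₀⟩ ⊆ π₁₅ˢ` contains
`h₁d₀` and has zero indeterminacy, hence equals `{h₁d₀}`, which is nonzero.  Inputs
(hypotheses): the relations `d₀ ∈ ⟨h₀, h₁, h₂, c₀⟩` and `h₀h₂ ∈ ⟨h₁, h₀, h₁⟩`, the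
shuffling identities `a·⟨b,c,d⟩ ⊆ ⟨⟨a,b,c⟩,d,e⟩`-type inclusions, `h₀h₂ = 2h₂`,
`2h₁ = 0`, the indeterminacy formula `π₇·c₀ + 3h₂·π₁₂` with `π₁₂ = 0` and `π₇·c₀ = 0`. -/
theorem stmt_12 {R : Type*} [Ring R]
    (tb3 : R → R → R → Set R) (tb4 : R → R → R → R → Set R)
    (h0 h1 h2 c0 d0 : R)
    (hd0 : d0 ∈ tb4 h0 h1 h2 c0)
    (hh0h2 : h0 * h2 ∈ tb3 h1 h0 h1)
    (hshuffle_c : ∀ x ∈ tb4 h0 h1 h2 c0, ∀ s ∈ tb3 h1 h0 h1, h1 * x ∈ tb3 s h2 c0)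
    (hshuffle_b : tb3 (h0 * h2) h2 c0 ⊆ tb3 h2 (h0 * h2) c0)
    (hh0 : h0 * h2 = 2 * h2)
    (h1tors : 2 * h1 = 0)
    (hodd : ∀ x ∈ tb3 h2 (2 * h2) c0, 3 * x ∈ tb3 (3 * h2) (2 * h2) c0)
    (P7 P12 : Set R) (hP12 : P12 ⊆ {0}) (hP7c0 : ∀ u ∈ P7, u * c0 = 0)
    (hindet : ∀ x ∈ tb3 (3 * h2) (2 * h2) c0, ∀ y ∈ tb3 (3 * h2) (2 * h2) c0,
      ∃ u ∈ P7, ∃ v ∈ P12, x - y = u * c0 + (3 * h2) * v)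
    (hne : h1 * d0 ≠ 0) :
    h1 * d0 ∈ tb3 (3 * h2) (2 * h2) c0 ∧
      tb3 (3 * h2) (2 * h2) c0 = {h1 * d0} ∧ h1 * d0 ≠ 0 := by
  have step1 : h1 * d0 ∈ tb3 (h0 * h2) h2 c0 := hshuffle_c d0 hd0 (h0 * h2) hh0h2
  have step2 : h1 * d0 ∈ tb3 h2 (2 * h2) c0 := hh0 ▸ hshuffle_b step1
  have key : 3 * (h1 * d0) = h1 * d0 := by
    have : (2 : R) * (h1 * d0) = 0 := by
      rw [← mul_assoc, h1tors, zero_mul]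
    rw [show (3 : R) = 2 + 1 by norm_num, add_mul, one_mul, this, zero_add]
  have mem : h1 * d0 ∈ tb3 (3 * h2) (2 * h2) c0 := key ▸ hodd _ step2
  refine ⟨mem, ?_, hne⟩
  ext x
  simp only [Set.mem_singleton_iff]
  constructor
  · intro hx
    obtain ⟨u, hu, v, hv, huv⟩ := hindet x hx (h1 * d0) mem
    have hv0 : v = 0 := hP12 hv
    have := hP7c0 u hu
    rw [hv0, mul_zero, add_zero, this] at huv
    exact sub_eq_zero.mp huv
  · rintro rfl; exact mem
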